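/- Let r ≥ 1, n ≥ 0, m ≥ 0 and s = (s_1, …, s_{n+m}) ∈ ℝ_{>0}^{n+m} with s_i ≤ s_{i+1} for 1 ≤ i ≤ n+m−1. Put t = (s_1, …, s_m). Then s'_i := ε̂^{r,m}_t(s_{m+i}) > 0 for 1 ≤ i ≤ n, and for every x ∈ ℝ_{≥0} one has ε̂^{r,n+m}_s(x) = ε̂^{r+m,n}_{s'}(ε̂^{r,m}_t(x)), where s' = (s'_1, …, s'_n). -/

import Mathlib

noncomputable section

open scoped BigOperators

open Classical in
/-- The absolute value `|y| = q^{deg y}` (and `|0| = 0`) on `A = F_q[T]`. -/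
def absA (Fq : Type) [Field Fq] [Fintype Fq] (y : Polynomial Fq) : ℝ :=
  if y = 0 then 0 else (Fintype.card Fq : ℝ) ^ y.natDegree

/-- `ε^{r,n}_s(x) = x + Σ_{y ∈ A^n, y ≠ 0} max(x − max_{1≤i≤n} |y_i|^r·s_i, 0)`.
(For each `x` only finitely many summands are nonzero, so the `tsum` agrees with the
intended sum; the inner `⨆` over the finite type `Fin n` is the maximum.) -/
def epsFun (Fq : Type) [Field Fq] [Fintype Fq] (r n : ℕ) (s : Fin n → ℝ) (x : ℝ) : ℝ :=
  x + ∑' y : {y : Fin n → Polynomial Fq // y ≠ 0},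
      max (x - ⨆ i : Fin n, (absA Fq (y.1 i)) ^ r * s i) 0

/-- `δ^{r,n}(s) = ((q−1)/(q^{r+n}−1))·Σ_{i=1}^n q^{n−i}·ε^{r,i−1}_{(s_1,…,s_{i−1})}(s_i)`. -/
def deltaFun (Fq : Type) [Field Fq] [Fintype Fq] (r n : ℕ) (s : Fin n → ℝ) : ℝ :=
  ((Fintype.card Fq : ℝ) - 1) / ((Fintype.card Fq : ℝ) ^ (r + n) - 1) *
    ∑ i : Fin n, (Fintype.card Fq : ℝ) ^ (n - 1 - (i : ℕ)) *
      epsFun Fq r i (fun j : Fin (i : ℕ) => s (Fin.castLE i.isLt.le j)) (s i)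

/-- `ε̂^{r,n}_s(x) = ε^{r,n}_s(x) − δ^{r,n}(s)`. -/
def epsHat (Fq : Type) [Field Fq] [Fintype Fq] (r n : ℕ) (s : Fin n → ℝ) (x : ℝ) : ℝ :=
  epsFun Fq r n s x - deltaFun Fq r n s


/-!
Peeling off the last coordinate writes `ε^{R,k+1}_σ(x)` as
`Σ_{v ∈ A} max(ε'(x) - ε'(|v|^R σ_{k+1}), 0)` with `ε' = ε^{R,k}_{(σ_1, …, σ_k)}`.
For positive nondecreasing weights `t`, the function `ε̂ = ε̂^{R,k}_t` is homogeneous: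
`ε̂(q^R c) = q^{R+k} ε̂(c)` as soon as `c ≥ max t`, hence `ε̂(|v|^R c) = |v|^{R+k} ε̂(c)`
for `v ≠ 0`. So after peeling, `ε^{r,m+n}_s` sees `ε^{r,m}_t` only through `ε̂^{r,m}_t` and
the rescaled weights `s'`, and induction on `n` gives
`ε^{r,m+n}_s = δ^{r,m}(t) + ε^{r+m,n}_{s'} ∘ ε̂^{r,m}_t`, with the matching recursion
`δ^{r,m+n}(s) = δ^{r,m}(t) + δ^{r+m,n}(s')`.
Homogeneity in dimension `k + 1` is the case `n = 1` of this splitting combined with homogeneity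
in dimension one, which holds because `|w T + a| = q |w|` for `w ≠ 0`.
-/

open Polynomial

theorem Summable.tsum_eq_add_tsum_ne {ι α : Type*} [AddCommGroup α] [UniformSpace α]
    [IsUniformAddGroup α] [CompleteSpace α] [T2Space α] {f : ι → α} (hf : Summable f)
    (a : ι) :
    ∑' x, f x = f a + ∑' x : {x // x ≠ a}, f x := by
  rw [← hf.tsum_subtype_add_tsum_subtype_compl {a}, tsum_singleton]
  rfl

theorem iSup_fin_succ_eq_max {k : ℕ} (f : Fin (k + 1) → ℝ) (hf : 0 ≤ f (Fin.last k)) :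
    ⨆ i, f i = max (⨆ j : Fin k, f j.castSucc) (f (Fin.last k)) := by
  have hbdd : BddAbove (Set.range f) := (Set.finite_range f).bddAbove
  refine le_antisymm (ciSup_le fun i => ?_) (max_le ?_ (le_ciSup hbdd _))
  · induction i using Fin.lastCases with
    | last => exact le_max_right _ _
    | cast j =>
      exact (le_ciSup (f := fun j : Fin k => f j.castSucc) (Set.finite_range _).bddAbove j).trans
        (le_max_left _ _)
  · exact Real.iSup_le (fun j => le_ciSup hbdd _) (hf.trans (le_ciSup hbdd _))

theorem max_sub_max_eq (x M c : ℝ) :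
    max (x - max M c) 0 = max (x - M) 0 - max (min x c - M) 0 := by
  simp only [max_def, min_def]
  split_ifs <;> linarith

def Polynomial.divXEquiv (K : Type*) [Semiring K] : K[X] ≃ K[X] × K where
  toFun p := (p.divX, p.coeff 0)
  invFun wa := wa.1 * X + C wa.2
  left_inv := divX_mul_X_add
  right_inv := fun ⟨w, a⟩ => by
    ext n
    · simp [coeff_divX]
    · simp

theorem Summable.sum_mul_X_add_C {K α : Type*} [Semiring K] [Fintype K] [AddCommGroup α]
    [UniformSpace α] [IsUniformAddGroup α] [CompleteSpace α] {f : K[X] → α}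
    (hf : Summable f) :
    Summable fun w => ∑ a : K, f (w * X + C a) :=
  ((divXEquiv K).symm.summable_iff.2 hf).prod.congr fun _ => tsum_fintype _

theorem Summable.tsum_eq_tsum_sum_mul_X_add_C {K α : Type*} [Semiring K] [Fintype K]
    [AddCommGroup α] [UniformSpace α] [IsUniformAddGroup α] [CompleteSpace α] [T0Space α]
    {f : K[X] → α} (hf : Summable f) :
    ∑' v, f v = ∑' w, ∑ a : K, f (w * X + C a) := by
  rw [← (divXEquiv K).symm.tsum_eq]
  exact ((divXEquiv K).symm.summable_iff.2 hf).tsum_prod.trans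
    (tsum_congr fun _ => tsum_fintype _)

section

variable {Fq : Type} [Field Fq] [Fintype Fq] {R k n : ℕ} {s : Fin n → ℝ}

theorem one_lt_card_real : 1 < (Fintype.card Fq : ℝ) := mod_cast Fintype.one_lt_card

@[simp] theorem absA_zero : absA Fq 0 = 0 := by simp [absA]

theorem absA_of_ne_zero {p : Fq[X]} (hp : p ≠ 0) :
    absA Fq p = (Fintype.card Fq : ℝ) ^ p.natDegree := by
  simp [absA, hp]

theorem absA_nonneg (p : Fq[X]) : 0 ≤ absA Fq p := by
  unfold absA; split_ifs <;> positivity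

theorem one_le_absA {p : Fq[X]} (hp : p ≠ 0) : 1 ≤ absA Fq p := by
  rw [absA_of_ne_zero hp]; exact one_le_pow₀ one_lt_card_real.le

theorem absA_C {a : Fq} (ha : a ≠ 0) : absA Fq (C a) = 1 := by
  simp [absA, ha]

theorem absA_mul_X_add_C {w : Fq[X]} (hw : w ≠ 0) (a : Fq) :
    absA Fq (w * X + C a) = (Fintype.card Fq : ℝ) * absA Fq w := by
  have hdeg : (w * X + C a).natDegree = w.natDegree + 1 := by
    rw [natDegree_add_C, natDegree_mul_X hw]
  have hne : w * X + C a ≠ 0 := fun h => by simp [h] at hdeg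
  rw [absA_of_ne_zero hne, absA_of_ne_zero hw, hdeg, pow_succ, mul_comm]

theorem finite_setOf_absA_pow_mul_lt (hR : R ≠ 0) {θ : ℝ} (hθ : 0 < θ) (x : ℝ) :
    {v : Fq[X] | absA Fq v ^ R * θ < x}.Finite := by
  obtain ⟨D, hD⟩ := pow_unbounded_of_one_lt (x / θ) (one_lt_card_real (Fq := Fq))
  have : Finite (degreeLT Fq D) := (degreeLTEquiv Fq D).toEquiv.finite_iff.mpr inferInstance
  refine (Set.toFinite (degreeLT Fq D : Set Fq[X])).subset fun v hv => ?_
  rw [SetLike.mem_coe, mem_degreeLT]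
  by_cases hv0 : v = 0
  · simp [hv0]
  rw [← natDegree_lt_iff_degree_lt hv0, ← pow_lt_pow_iff_right₀ (one_lt_card_real (Fq := Fq)),
    ← absA_of_ne_zero hv0]
  calc absA Fq v ≤ absA Fq v ^ R := le_self_pow₀ (one_le_absA hv0) hR
    _ < x / θ := (lt_div_iff₀ hθ).2 hv
    _ < _ := hD

theorem iSup_absA_pow_mul_nonneg (hs : ∀ i, 0 ≤ s i) (y : Fin n → Fq[X]) :
    0 ≤ ⨆ i, absA Fq (y i) ^ R * s i :=
  Real.iSup_nonneg fun i => mul_nonneg (pow_nonneg (absA_nonneg _) _) (hs i)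

theorem epsFun_of_nonpos (hs : ∀ i, 0 ≤ s i) {x : ℝ} (hx : x ≤ 0) :
    epsFun Fq R n s x = x := by
  have h (y : {y : Fin n → Fq[X] // y ≠ 0}) :
      max (x - ⨆ i, absA Fq (y.1 i) ^ R * s i) 0 = 0 :=
    max_eq_right (by linarith [iSup_absA_pow_mul_nonneg (R := R) hs y.1])
  rw [epsFun, tsum_congr h, tsum_zero, add_zero]

theorem epsFun_zero_dim (s : Fin 0 → ℝ) (x : ℝ) : epsFun Fq R 0 s x = x := by
  have : IsEmpty {y : Fin 0 → Fq[X] // y ≠ 0} := ⟨fun y => y.2 (Subsingleton.elim _ _)⟩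
  simp [epsFun]

theorem deltaFun_zero_dim (s : Fin 0 → ℝ) : deltaFun Fq R 0 s = 0 := by
  simp [deltaFun]

theorem epsHat_zero_dim (s : Fin 0 → ℝ) (x : ℝ) : epsHat Fq R 0 s x = x := by
  simp [epsHat, epsFun_zero_dim, deltaFun_zero_dim]

theorem summable_max_sub_iSup (hR : R ≠ 0) (hs : ∀ i, 0 < s i) (x : ℝ) :
    Summable fun y : Fin n → Fq[X] => max (x - ⨆ i, absA Fq (y i) ^ R * s i) 0 := by
  have hfin := Set.Finite.pi (t := fun i => {v : Fq[X] | absA Fq v ^ R * s i < x})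
    fun i => finite_setOf_absA_pow_mul_lt hR (hs i) x
  refine summable_of_ne_finset_zero (s := hfin.toFinset) fun y hy => max_eq_right ?_
  simp only [Set.Finite.mem_toFinset, Set.mem_pi, Set.mem_univ, Set.mem_ofPred_eq, true_implies,
    not_forall, not_lt] at hy
  obtain ⟨i, hi⟩ := hy
  linarith [le_ciSup (Set.finite_range fun i => absA Fq (y i) ^ R * s i).bddAbove i]

theorem summable_max_sub_comp_absA {G : ℝ → ℝ} (hG : Monotone G) (hR : R ≠ 0) {θ : ℝ}
    (hθ : 0 < θ) (x : ℝ) :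
    Summable fun v : Fq[X] => max (G x - G (absA Fq v ^ R * θ)) 0 := by
  refine summable_of_ne_finset_zero
    (s := (finite_setOf_absA_pow_mul_lt hR hθ x).toFinset) fun v hv => ?_
  simp only [Set.Finite.mem_toFinset, Set.mem_ofPred_eq, not_lt] at hv
  exact max_eq_right (sub_nonpos.2 (hG hv))

theorem epsFun_eq_tsum (hR : R ≠ 0) (hs : ∀ i, 0 < s i) {x : ℝ} (hx : 0 ≤ x) :
    epsFun Fq R n s x = ∑' y : Fin n → Fq[X], max (x - ⨆ i, absA Fq (y i) ^ R * s i) 0 := by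
  rw [(summable_max_sub_iSup hR hs x).tsum_eq_add_tsum_ne 0]
  simp [epsFun, zero_pow hR, hx]

theorem sub_le_epsFun_sub (hR : R ≠ 0) (hs : ∀ i, 0 < s i) {a b : ℝ} (hab : a ≤ b) :
    b - a ≤ epsFun Fq R n s b - epsFun Fq R n s a := by
  have := Summable.tsum_le_tsum (fun y : {y : Fin n → Fq[X] // y ≠ 0} =>
      max_le_max (sub_le_sub_right hab (⨆ i, absA Fq (y.1 i) ^ R * s i)) le_rfl)
    ((summable_max_sub_iSup hR hs a).subtype _) ((summable_max_sub_iSup hR hs b).subtype _)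
  simp only [epsFun]
  linarith

theorem epsFun_mono (hR : R ≠ 0) (hs : ∀ i, 0 < s i) : Monotone (epsFun Fq R n s) :=
  fun a b hab => by linarith [sub_le_epsFun_sub (Fq := Fq) hR hs hab]

theorem epsFun_nonneg (hR : R ≠ 0) (hs : ∀ i, 0 < s i) {x : ℝ} (hx : 0 ≤ x) :
    0 ≤ epsFun Fq R n s x := by
  simpa [epsFun_of_nonpos (fun i => (hs i).le) le_rfl] using epsFun_mono (Fq := Fq) hR hs hx

theorem tsum_max_sub_max_iSup (hR : R ≠ 0) (hs : ∀ i, 0 < s i) {x c : ℝ} (hx : 0 ≤ x)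
    (hc : 0 ≤ c) :
    ∑' u : Fin n → Fq[X], max (x - max (⨆ i, absA Fq (u i) ^ R * s i) c) 0 =
      max (epsFun Fq R n s x - epsFun Fq R n s c) 0 := by
  simp_rw [max_sub_max_eq x _ c]
  rw [Summable.tsum_sub (summable_max_sub_iSup hR hs x) (summable_max_sub_iSup hR hs _),
    ← epsFun_eq_tsum hR hs hx, ← epsFun_eq_tsum hR hs (le_min hx hc)]
  rcases le_total x c with h | h
  · rw [min_eq_left h, sub_self, max_eq_right (sub_nonpos.2 (epsFun_mono hR hs h))]
  · rw [min_eq_right h, max_eq_left (sub_nonneg.2 (epsFun_mono hR hs h))]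

theorem epsFun_succ (hR : R ≠ 0) {σ : Fin (k + 1) → ℝ} (hσ : ∀ i, 0 < σ i) (x : ℝ) :
    epsFun Fq R (k + 1) σ x = epsFun Fq R k (Fin.init σ) x +
      ∑' v : {v : Fq[X] // v ≠ 0}, max (epsFun Fq R k (Fin.init σ) x -
        epsFun Fq R k (Fin.init σ) (absA Fq v.1 ^ R * σ (Fin.last k))) 0 := by
  set ε := epsFun Fq R k (Fin.init σ)
  have hσ' : ∀ j, 0 < Fin.init σ j := fun j => hσ _
  have harg (v : Fq[X]) : 0 ≤ absA Fq v ^ R * σ (Fin.last k) :=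
    mul_nonneg (pow_nonneg (absA_nonneg _) _) (hσ _).le
  have hε_nonneg (v : Fq[X]) : 0 ≤ ε (absA Fq v ^ R * σ (Fin.last k)) :=
    epsFun_nonneg hR hσ' (harg v)
  rcases lt_or_ge x 0 with hx | hx
  · have hεx : ε x = x := epsFun_of_nonpos (fun j => (hσ' j).le) hx.le
    have h0 (v : {v : Fq[X] // v ≠ 0}) :
        max (ε x - ε (absA Fq v.1 ^ R * σ (Fin.last k))) 0 = 0 :=
      max_eq_right (by linarith [hε_nonneg v.1])
    rw [tsum_congr h0, tsum_zero, add_zero, hεx, epsFun_of_nonpos (fun i => (hσ i).le) hx.le]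
  have hsum : Summable fun p : Fq[X] × (Fin k → Fq[X]) =>
      max (x - ⨆ i, absA Fq (Fin.snocEquiv (fun _ => Fq[X]) p i) ^ R * σ i) 0 :=
    (Fin.snocEquiv _).summable_iff.2 (summable_max_sub_iSup hR hσ x)
  have hv0 : max (ε x - ε (absA Fq 0 ^ R * σ (Fin.last k))) 0 = ε x := by
    have hε0 : ε 0 = 0 := epsFun_of_nonpos (fun j => (hσ' j).le) le_rfl
    rw [absA_zero, zero_pow hR, zero_mul, hε0, sub_zero, max_eq_left (epsFun_nonneg hR hσ' hx)]
  calc epsFun Fq R (k + 1) σ x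
      = ∑' v : Fq[X], max (ε x - ε (absA Fq v ^ R * σ (Fin.last k))) 0 := by
        rw [epsFun_eq_tsum hR hσ hx, ← (Fin.snocEquiv _).tsum_eq, hsum.tsum_prod]
        refine tsum_congr fun v => ?_
        rw [← tsum_max_sub_max_iSup hR hσ' hx (harg v)]
        refine tsum_congr fun u => ?_
        rw [iSup_fin_succ_eq_max _ (by simpa using harg v)]
        simp [Fin.init]
    _ = _ := by
        rw [(summable_max_sub_comp_absA (epsFun_mono hR hσ') hR (hσ _) x).tsum_eq_add_tsum_ne 0,
          hv0]

theorem deltaFun_succ (hR : R ≠ 0) (σ : Fin (k + 1) → ℝ) :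
    ((Fintype.card Fq : ℝ) ^ (R + (k + 1)) - 1) * deltaFun Fq R (k + 1) σ =
      (Fintype.card Fq : ℝ) * ((Fintype.card Fq : ℝ) ^ (R + k) - 1) *
          deltaFun Fq R k (Fin.init σ) +
        ((Fintype.card Fq : ℝ) - 1) * epsFun Fq R k (Fin.init σ) (σ (Fin.last k)) := by
  set q : ℝ := (Fintype.card Fq : ℝ) with hq
  set S := ∑ j : Fin k, q ^ (k - 1 - (j : ℕ)) *
    epsFun Fq R j (fun l => Fin.init σ (Fin.castLE j.isLt.le l)) (Fin.init σ j)
  have hk : deltaFun Fq R k (Fin.init σ) = (q - 1) / (q ^ (R + k) - 1) * S := rfl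
  have hk1 : deltaFun Fq R (k + 1) σ =
      (q - 1) / (q ^ (R + (k + 1)) - 1) *
        (q * S + epsFun Fq R k (Fin.init σ) (σ (Fin.last k))) := by
    have hterm (j : Fin k) :
        q ^ (k + 1 - 1 - (j.castSucc : ℕ)) = q * q ^ (k - 1 - (j : ℕ)) := by
      rw [show k + 1 - 1 - (j.castSucc : ℕ) = k - 1 - j + 1 by simp; omega, pow_succ, mul_comm]
    rw [deltaFun, Fin.sum_univ_castSucc, ← hq]
    simp only [hterm, mul_assoc, ← Finset.mul_sum]
    simp only [Fin.val_last, Nat.add_sub_cancel, Nat.sub_self, pow_zero, one_mul]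
    rfl
  have h1 : q ^ (R + (k + 1)) - 1 ≠ 0 :=
    (sub_pos.2 (one_lt_pow₀ (one_lt_card_real (Fq := Fq)) (by omega))).ne'
  have h2 : q ^ (R + k) - 1 ≠ 0 :=
    (sub_pos.2 (one_lt_pow₀ (one_lt_card_real (Fq := Fq)) (by omega))).ne'
  rw [hk, hk1]
  field_simp

theorem tsum_max_card_pow_mul_sub (hR : R ≠ 0) {θ x : ℝ} (hθ : 0 < θ) (hx : θ ≤ x) :
    ∑' v : Fq[X], max ((Fintype.card Fq : ℝ) ^ R * x - absA Fq v ^ R * θ) 0 =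
      (Fintype.card Fq : ℝ) ^ (R + 1) * ∑' v : Fq[X], max (x - absA Fq v ^ R * θ) 0 -
        ((Fintype.card Fq : ℝ) - 1) * θ := by
  classical
  set q : ℝ := (Fintype.card Fq : ℝ) with hq
  have hqx : x ≤ q ^ R * x :=
    le_mul_of_one_le_left (hθ.le.trans hx) (one_le_pow₀ one_lt_card_real.le)
  set f : Fq[X] → ℝ := fun v => max (q ^ R * x - absA Fq v ^ R * θ) 0
  set g : Fq[X] → ℝ := fun v => max (x - absA Fq v ^ R * θ) 0
  have hf : Summable f := summable_max_sub_comp_absA monotone_id hR hθ _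
  have hg : Summable g := summable_max_sub_comp_absA monotone_id hR hθ _
  set h : Fq[X] → ℝ := fun w => ∑ a : Fq, f (w * X + C a)
  have hh : Summable h := hf.sum_mul_X_add_C
  -- `|w X + a| = q |w|` for `w ≠ 0`, so each of the `q` lifts of `w` contributes `q^R g w`
  have hh_ne (w : Fq[X]) (hw : w ≠ 0) : h w = q ^ (R + 1) * g w := by
    have hlift (a : Fq) : f (w * X + C a) = q ^ R * g w := by
      simp only [f, g, absA_mul_X_add_C hw, mul_pow, mul_zero, mul_sub, mul_assoc, ← hq,
        mul_max_of_nonneg _ _ (by positivity : 0 ≤ q ^ R)]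
    simp only [h, hlift, Finset.sum_const, Finset.card_univ, nsmul_eq_mul, ← hq]
    ring
  have hh0 : h 0 = q * (q ^ R * x - θ) + θ := by
    have hconst (a : Fq) : f (0 * X + C a) = (q ^ R * x - θ) + if a = 0 then θ else 0 := by
      by_cases ha : a = 0
      · simp [f, ha, zero_pow hR, hθ.le.trans (hx.trans hqx)]
      · simp only [f, zero_mul, zero_add, absA_C ha, one_pow, one_mul, ha, if_false, add_zero]
        exact max_eq_left (by linarith)
    simp only [h, hconst, Finset.sum_add_distrib, Finset.sum_const, Finset.card_univ, nsmul_eq_mul,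
      ← hq, Finset.sum_ite_eq', Finset.mem_univ, if_true]
  have hg0 : g 0 = x := by simp [g, zero_pow hR, hθ.le.trans hx]
  rw [hf.tsum_eq_tsum_sum_mul_X_add_C, hh.tsum_eq_add_tsum_ne 0, hg.tsum_eq_add_tsum_ne 0,
    tsum_congr fun w : {w : Fq[X] // w ≠ 0} => hh_ne w w.2, tsum_mul_left, hh0, hg0]
  ring

theorem epsFun_one_dim (hR : R ≠ 0) {σ : Fin 1 → ℝ} (hσ : 0 < σ 0) {x : ℝ}
    (hx : 0 ≤ x) :
    epsFun Fq R 1 σ x = ∑' v : Fq[X], max (x - absA Fq v ^ R * σ 0) 0 := by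
  rw [epsFun_eq_tsum hR (fun i => by rwa [Subsingleton.elim i 0]) hx,
    ← (Equiv.funUnique (Fin 1) Fq[X]).symm.tsum_eq]
  simp [ciSup_unique]

end

def EpsHatHomogeneous (Fq : Type) [Field Fq] [Fintype Fq] (R k : ℕ) (t : Fin k → ℝ) : Prop :=
  ∀ c, (∀ i, t i ≤ c) →
    epsHat Fq R k t ((Fintype.card Fq : ℝ) ^ R * c) =
      (Fintype.card Fq : ℝ) ^ (R + k) * epsHat Fq R k t c

/-- The weights `s'_i = ε̂^{r,m}_t(s_{m+i})` of the statement, where `t = (s_1, …, s_m)`. -/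
def derivedWeights (Fq : Type) [Field Fq] [Fintype Fq] (r m n : ℕ) (s : Fin (m + n) → ℝ) :
    Fin n → ℝ :=
  fun i => epsHat Fq r m (fun j => s (Fin.castAdd n j)) (s (Fin.natAdd m i))

section

variable {Fq : Type} [Field Fq] [Fintype Fq] {R k : ℕ} {t : Fin k → ℝ}

namespace EpsHatHomogeneous

theorem pow_mul (h : EpsHatHomogeneous Fq R k t) {c : ℝ} (hc0 : 0 ≤ c) (hc : ∀ i, t i ≤ c)
    (d : ℕ) :
    epsHat Fq R k t (((Fintype.card Fq : ℝ) ^ R) ^ d * c) =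
      ((Fintype.card Fq : ℝ) ^ (R + k)) ^ d * epsHat Fq R k t c := by
  induction d with
  | zero => simp
  | succ d ih =>
    have hcd (i : Fin k) : t i ≤ ((Fintype.card Fq : ℝ) ^ R) ^ d * c :=
      (hc i).trans (le_mul_of_one_le_left hc0 (one_le_pow₀ (one_le_pow₀ one_lt_card_real.le)))
    rw [pow_succ', mul_assoc, h _ hcd, ih, pow_succ', mul_assoc]

theorem absA_pow_mul (h : EpsHatHomogeneous Fq R k t) {c : ℝ} (hc0 : 0 ≤ c)
    (hc : ∀ i, t i ≤ c) {v : Fq[X]} (hv : v ≠ 0) :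
    epsHat Fq R k t (absA Fq v ^ R * c) = absA Fq v ^ (R + k) * epsHat Fq R k t c := by
  rw [absA_of_ne_zero hv, pow_right_comm, pow_right_comm _ v.natDegree]
  exact h.pow_mul hc0 hc _

theorem epsHat_pos (h : EpsHatHomogeneous Fq R k t) (hR : R ≠ 0) (ht : ∀ i, 0 < t i) {c : ℝ}
    (hc0 : 0 < c) (hc : ∀ i, t i ≤ c) : 0 < epsHat Fq R k t c := by
  have hqR : 1 < (Fintype.card Fq : ℝ) ^ R := one_lt_pow₀ one_lt_card_real hR
  have hqRk : 1 < (Fintype.card Fq : ℝ) ^ (R + k) := one_lt_pow₀ one_lt_card_real (by omega)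
  have hgrow : c < (Fintype.card Fq : ℝ) ^ R * c := lt_mul_of_one_lt_left hc0 hqR
  have hslope := sub_le_epsFun_sub (Fq := Fq) hR ht hgrow.le
  have hscale := h c hc
  simp only [epsHat] at hscale ⊢
  have : 0 < ((Fintype.card Fq : ℝ) ^ (R + k) - 1) * (epsFun Fq R k t c - deltaFun Fq R k t) := by
    linarith
  exact pos_of_mul_pos_right this (by linarith)

end EpsHatHomogeneous

theorem epsHatHomogeneous_one_dim (hR : R ≠ 0) {σ : Fin 1 → ℝ} (hσ : 0 < σ 0) :
    EpsHatHomogeneous Fq R 1 σ := by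
  intro c hc
  have hc0 : σ 0 ≤ c := hc 0
  have hδ : ((Fintype.card Fq : ℝ) ^ (R + 1) - 1) * deltaFun Fq R 1 σ =
      ((Fintype.card Fq : ℝ) - 1) * σ 0 := by
    simpa [epsFun_zero_dim, deltaFun_zero_dim] using deltaFun_succ (Fq := Fq) (k := 0) hR σ
  simp only [epsHat]
  rw [epsFun_one_dim hR hσ (mul_nonneg (by positivity) (hσ.le.trans hc0)),
    epsFun_one_dim hR hσ (hσ.le.trans hc0), tsum_max_card_pow_mul_sub hR hσ hc0]
  linear_combination hδ

end

section

variable {Fq : Type} [Field Fq] [Fintype Fq] {r m n : ℕ} {s : Fin (m + n) → ℝ}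

theorem derivedWeights_pos (hr : r ≠ 0) (hs : ∀ i, 0 < s i) (hmono : Monotone s)
    (hhom : EpsHatHomogeneous Fq r m fun j => s (Fin.castAdd n j)) (i : Fin n) :
    0 < derivedWeights Fq r m n s i :=
  hhom.epsHat_pos hr (fun j => hs _) (hs _) fun j =>
    hmono (Fin.le_def.2 (by simp only [Fin.val_castAdd, Fin.val_natAdd]; omega))

theorem epsFun_split (hr : r ≠ 0) (hs : ∀ i, 0 < s i) (hmono : Monotone s)
    (hhom : EpsHatHomogeneous Fq r m fun j => s (Fin.castAdd n j)) (x : ℝ) :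
    epsFun Fq r (m + n) s x = deltaFun Fq r m (fun j => s (Fin.castAdd n j)) +
      epsFun Fq (r + m) n (derivedWeights Fq r m n s)
        (epsHat Fq r m (fun j => s (Fin.castAdd n j)) x) := by
  induction n generalizing x with
  | zero =>
    rw [epsFun_zero_dim, epsHat, add_sub_cancel]
    rfl
  | succ n ih =>
    set t := fun j => s (Fin.castAdd (n + 1) j)
    set s' := derivedWeights Fq r m (n + 1) s
    set G := epsFun Fq (r + m) n (Fin.init s')
    have hs' : ∀ i, 0 < s' i := derivedWeights_pos hr hs hmono hhom
    have hprefix : epsFun Fq r (m + n) (Fin.init s) =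
        fun z => deltaFun Fq r m t + G (epsHat Fq r m t z) :=
      funext (ih (fun i => hs _) (hmono.comp Fin.strictMono_castSucc.monotone) hhom)
    have hscale (v : {v : Fq[X] // v ≠ 0}) :
        epsHat Fq r m t (absA Fq v.1 ^ r * s (Fin.last (m + n))) =
          absA Fq v.1 ^ (r + m) * s' (Fin.last n) :=
      hhom.absA_pow_mul (hs _).le (fun j => hmono (Fin.le_last _)) v.2
    calc epsFun Fq r (m + n + 1) s x
        = epsFun Fq r (m + n) (Fin.init s) x + ∑' v : {v : Fq[X] // v ≠ 0},
            max (epsFun Fq r (m + n) (Fin.init s) x -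
              epsFun Fq r (m + n) (Fin.init s) (absA Fq v.1 ^ r * s (Fin.last (m + n)))) 0 :=
          epsFun_succ hr hs x
      _ = deltaFun Fq r m t + (G (epsHat Fq r m t x) + ∑' v : {v : Fq[X] // v ≠ 0},
            max (G (epsHat Fq r m t x) - G (absA Fq v.1 ^ (r + m) * s' (Fin.last n))) 0) := by
          rw [hprefix]
          simp only [hscale, add_sub_add_left_eq_sub, add_assoc]
      _ = _ := by rw [epsFun_succ (by omega) hs']

theorem deltaFun_split (hr : r ≠ 0) (hs : ∀ i, 0 < s i) (hmono : Monotone s)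
    (hhom : EpsHatHomogeneous Fq r m fun j => s (Fin.castAdd n j)) :
    deltaFun Fq r (m + n) s = deltaFun Fq r m (fun j => s (Fin.castAdd n j)) +
      deltaFun Fq (r + m) n (derivedWeights Fq r m n s) := by
  induction n with
  | zero =>
    show deltaFun Fq r m s = deltaFun Fq r m s + deltaFun Fq (r + m) 0 _
    rw [deltaFun_zero_dim, add_zero]
  | succ n ih =>
    set q : ℝ := (Fintype.card Fq : ℝ)
    set t := fun j => s (Fin.castAdd (n + 1) j)
    set s' := derivedWeights Fq r m (n + 1) s
    have hinit_mono : Monotone (Fin.init s) := hmono.comp Fin.strictMono_castSucc.monotone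
    have hprefix : deltaFun Fq r (m + n) (Fin.init s) =
        deltaFun Fq r m t + deltaFun Fq (r + m) n (Fin.init s') :=
      ih (fun i => hs _) hinit_mono hhom
    have hlast : epsFun Fq r (m + n) (Fin.init s) (s (Fin.last (m + n))) =
        deltaFun Fq r m t + epsFun Fq (r + m) n (Fin.init s') (s' (Fin.last n)) :=
      epsFun_split hr (fun i => hs _) hinit_mono hhom _
    have hrec := deltaFun_succ (Fq := Fq) (k := m + n) hr s
    have hrec' := deltaFun_succ (Fq := Fq) (k := n) (R := r + m) (by omega) s'
    have hne : q ^ (r + (m + n + 1)) - 1 ≠ 0 :=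
      (sub_pos.2 (one_lt_pow₀ (one_lt_card_real (Fq := Fq)) (by omega))).ne'
    show deltaFun Fq r (m + n + 1) s = deltaFun Fq r m t + deltaFun Fq (r + m) (n + 1) s'
    apply mul_left_cancel₀ hne
    linear_combination hrec - hrec' + q * (q ^ (r + (m + n)) - 1) * hprefix + (q - 1) * hlast

theorem epsHat_split (hr : r ≠ 0) (hs : ∀ i, 0 < s i) (hmono : Monotone s)
    (hhom : EpsHatHomogeneous Fq r m fun j => s (Fin.castAdd n j)) (x : ℝ) :
    epsHat Fq r (m + n) s x = epsHat Fq (r + m) n (derivedWeights Fq r m n s)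
      (epsHat Fq r m (fun j => s (Fin.castAdd n j)) x) := by
  have hε := epsFun_split hr hs hmono hhom x
  have hδ := deltaFun_split hr hs hmono hhom
  simp only [epsHat] at hε ⊢
  linarith

theorem epsHatHomogeneous_of_monotone {R k : ℕ} (hR : R ≠ 0) {t : Fin k → ℝ}
    (ht : ∀ i, 0 < t i) (hmono : Monotone t) :
    EpsHatHomogeneous Fq R k t := by
  induction k with
  | zero =>
    intro c _
    simp [epsHat_zero_dim]
  | succ k ih =>
    have hinit : EpsHatHomogeneous Fq R k fun j => t (Fin.castAdd 1 j) :=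
      ih (fun i => ht _) (hmono.comp Fin.strictMono_castSucc.monotone)
    set θ := derivedWeights Fq R k 1 t
    intro c hc
    have hθc : θ 0 ≤ epsHat Fq R k (fun j => t (Fin.castAdd 1 j)) c :=
      sub_le_sub_right (epsFun_mono hR (fun i => ht _) (hc _)) _
    rw [epsHat_split hR ht hmono hinit, epsHat_split hR ht hmono hinit, hinit c fun j => hc _,
      epsHatHomogeneous_one_dim (by omega) (derivedWeights_pos hR ht hmono hinit 0) _
        (Fin.forall_fin_one.2 hθc)]
    ring

end

/-- Let `r ≥ 1`, `n, m ≥ 0` and `s ∈ ℝ_{>0}^{m+n}` be nondecreasing.  Put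
`t = (s_1, …, s_m)`.  Then `s'_i := ε̂^{r,m}_t(s_{m+i}) > 0` for `1 ≤ i ≤ n`, and for every
`x ≥ 0` one has `ε̂^{r,n+m}_s(x) = ε̂^{r+m,n}_{s'}(ε̂^{r,m}_t(x))`. -/
theorem statement9 (Fq : Type) [Field Fq] [Fintype Fq]
    (r n m : ℕ) (hr : 1 ≤ r) (s : Fin (m + n) → ℝ) (hs : ∀ i, 0 < s i)
    (hmono : Monotone s) :
    (∀ i : Fin n,
      0 < epsHat Fq r m (fun j => s (Fin.castAdd n j)) (s (Fin.natAdd m i))) ∧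
    ∀ x : ℝ, 0 ≤ x →
      epsHat Fq r (m + n) s x =
        epsHat Fq (r + m) n
          (fun i => epsHat Fq r m (fun j => s (Fin.castAdd n j)) (s (Fin.natAdd m i)))
          (epsHat Fq r m (fun j => s (Fin.castAdd n j)) x) := by
  have hr0 : r ≠ 0 := by omega
  have hhom : EpsHatHomogeneous Fq r m fun j => s (Fin.castAdd n j) :=
    epsHatHomogeneous_of_monotone hr0 (fun j => hs _) fun a b hab => hmono hab
  exact ⟨derivedWeights_pos hr0 hs hmono hhom, fun x _ => epsHat_split hr0 hs hmono hhom x⟩
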